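/- arXiv:1611.03063 — 2 statements merged into one kernel-verified Lean document; each statement's English description precedes it below -/
import Mathlib

section
/- The measures satisfy 0 ≤ ρ² ≤ 1 and 0 ≤ λ² ≤ 1, where ρ² = E[(P(X) − μ_Y)²]/var(Y) and λ² = 1 − E[(P(X) − m(X))²]/E[(Y − m(X))²], with P(X) the linear correction of m(X). -/
/-!
Write `c = cov(Y, m) / Var m`, so that `P - μ_Y = c (m - E m)`. Then `E(P - μ_Y)² = c² Var m =
cov(Y, m)² / Var m`, which is at most `Var Y` by Cauchy–Schwarz; this bounds `ρ²`. For `λ²`,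
`P - m` and `Y - m` have the same mean `μ_Y - E m`, and
`Var(P - m) = (c - 1)² Var m ≤ Var Y - 2 cov(Y, m) + Var m = Var(Y - m)`
reduces, through `c Var m = cov(Y, m)`, to the same bound `c² Var m ≤ Var Y`.
-/

open MeasureTheory ProbabilityTheory

/-- The linearly corrected prediction function
`P(X) = μ_Y + (cov(Y, m(X))/var(m(X))) ⬝ (m(X) − E[m(X)])`. -/
noncomputable def linCorrect {Ω : Type*} [MeasurableSpace Ω] (μ : Measure Ω)
    (Y M : Ω → ℝ) (ω : Ω) : ℝ :=
  (∫ x, Y x ∂μ) +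
    ((∫ x, (Y x - ∫ y, Y y ∂μ) * (M x - ∫ y, M y ∂μ) ∂μ) / variance M μ) *
      (M ω - ∫ y, M y ∂μ)

namespace ProbabilityTheory

variable {Ω : Type*} [MeasurableSpace Ω] {μ : Measure Ω} [IsProbabilityMeasure μ] {X Y : Ω → ℝ}

lemma integral_sq_eq_variance_add_sq (hX : MemLp X 2 μ) :
    ∫ ω, X ω ^ 2 ∂μ = Var[X; μ] + (∫ ω, X ω ∂μ) ^ 2 := by
  rw [variance_eq_sub hX]
  simp only [Pi.pow_apply, sub_add_cancel]

/-- Cauchy–Schwarz: the quadratic `t ↦ Var[X - t Y]` is nonnegative, so its discriminant is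
nonpositive. -/
lemma covariance_sq_le_variance_mul_variance (hX : MemLp X 2 μ) (hY : MemLp Y 2 μ) :
    cov[X, Y; μ] ^ 2 ≤ Var[X; μ] * Var[Y; μ] := by
  have hquad : ∀ t : ℝ,
      0 ≤ Var[Y; μ] * (t * t) + (-2 * cov[X, Y; μ]) * t + Var[X; μ] := by
    intro t
    have h := variance_nonneg (fun ω ↦ X ω - t * Y ω) μ
    rw [variance_fun_sub hX (hY.const_mul t), covariance_const_mul_right,
      variance_const_mul] at h
    linarith
  have := discrim_le_zero hquad
  rw [discrim] at this
  linarith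

/-- Also when `Var[Y] = 0`, where the division is junk: Cauchy–Schwarz then forces the covariance
to vanish. -/
lemma covariance_div_variance_mul_variance (hX : MemLp X 2 μ) (hY : MemLp Y 2 μ) :
    cov[X, Y; μ] / Var[Y; μ] * Var[Y; μ] = cov[X, Y; μ] := by
  rcases eq_or_ne Var[Y; μ] 0 with hvar | hvar
  · have := covariance_sq_le_variance_mul_variance hX hY
    rw [hvar, mul_zero] at this
    rw [hvar, mul_zero, eq_comm, ← sq_eq_zero_iff]
    exact le_antisymm this (sq_nonneg _)
  · exact div_mul_cancel₀ _ hvar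

lemma sq_covariance_div_variance_le (hX : MemLp X 2 μ) (hY : MemLp Y 2 μ) :
    cov[X, Y; μ] ^ 2 / Var[Y; μ] ≤ Var[X; μ] :=
  div_le_of_le_mul₀ (variance_nonneg _ _) (variance_nonneg _ _)
    (covariance_sq_le_variance_mul_variance hX hY)

end ProbabilityTheory

section LinCorrect

variable {Ω : Type*} [MeasurableSpace Ω] {μ : Measure Ω} {Y M : Ω → ℝ}

lemma linCorrect_eq (ω : Ω) :
    linCorrect μ Y M ω =
      μ[Y] + cov[Y, M; μ] / Var[M; μ] * (M ω - μ[M]) := rfl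

lemma integral_sq_linCorrect_sub_integral (hM : AEMeasurable M μ) :
    ∫ ω, (linCorrect μ Y M ω - μ[Y]) ^ 2 ∂μ = (cov[Y, M; μ] / Var[M; μ]) ^ 2 * Var[M; μ] := by
  simp only [linCorrect_eq, add_sub_cancel_left, mul_pow]
  rw [integral_const_mul, ← variance_eq_integral hM]

variable [IsProbabilityMeasure μ]

lemma integral_sq_linCorrect_sub_integral_le (hY : MemLp Y 2 μ) (hM : MemLp M 2 μ) :
    ∫ ω, (linCorrect μ Y M ω - μ[Y]) ^ 2 ∂μ ≤ Var[Y; μ] := by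
  rw [integral_sq_linCorrect_sub_integral hM.aemeasurable, sq, mul_assoc,
    covariance_div_variance_mul_variance hY hM, div_mul_eq_mul_div, ← sq]
  exact sq_covariance_div_variance_le hY hM

lemma integral_sq_linCorrect_sub_le (hY : MemLp Y 2 μ) (hM : MemLp M 2 μ) :
    ∫ ω, (linCorrect μ Y M ω - M ω) ^ 2 ∂μ ≤ ∫ ω, (Y ω - M ω) ^ 2 ∂μ := by
  set c := cov[Y, M; μ] / Var[M; μ]
  have hM1 : Integrable M μ := hM.integrable one_le_two
  have hform : (fun ω ↦ linCorrect μ Y M ω - M ω) =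
      fun ω ↦ (c - 1) * (M ω - μ[M]) + (μ[Y] - μ[M]) := by
    funext ω
    rw [linCorrect_eq]
    ring
  have hP : MemLp (fun ω ↦ linCorrect μ Y M ω - M ω) 2 μ := by
    rw [hform]
    exact ((hM.sub (memLp_const _)).const_mul _).add (memLp_const _)
  have hmean : ∫ ω, (linCorrect μ Y M ω - M ω) ∂μ = ∫ ω, (Y ω - M ω) ∂μ := by
    rw [hform, integral_sub (hY.integrable one_le_two) hM1,
      integral_add (by fun_prop) (integrable_const _), integral_const_mul,
      integral_sub hM1 (integrable_const _)]
    simp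
  have hvar : Var[fun ω ↦ linCorrect μ Y M ω - M ω; μ] = (c - 1) ^ 2 * Var[M; μ] := by
    rw [hform, variance_add_const (by fun_prop), variance_const_mul,
      variance_sub_const hM.aestronglyMeasurable]
  rw [integral_sq_eq_variance_add_sq hP,
    integral_sq_eq_variance_add_sq (X := fun ω ↦ Y ω - M ω) (hY.sub hM), hmean, hvar,
    variance_fun_sub hY hM]
  have h1 : c * Var[M; μ] = cov[Y, M; μ] := covariance_div_variance_mul_variance hY hM
  have h2 := integral_sq_linCorrect_sub_integral_le hY hM
  rw [integral_sq_linCorrect_sub_integral hM.aemeasurable] at h2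
  linear_combination h2 - 2 * h1

end LinCorrect

theorem stmt8_general {Ω : Type*} [MeasurableSpace Ω] (μ : Measure Ω) [IsProbabilityMeasure μ]
    (Y M : Ω → ℝ) (hY : MemLp Y 2 μ) (hM : MemLp M 2 μ)
    (rhosq lamsq : ℝ)
    (hrho : rhosq = (∫ ω, (linCorrect μ Y M ω - ∫ y, Y y ∂μ) ^ 2 ∂μ) / variance Y μ)
    (hlam : lamsq = 1 -
      (∫ ω, (linCorrect μ Y M ω - M ω) ^ 2 ∂μ) / ∫ ω, (Y ω - M ω) ^ 2 ∂μ) :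
    0 ≤ rhosq ∧ rhosq ≤ 1 ∧ 0 ≤ lamsq ∧ lamsq ≤ 1 := by
  have hsq_nonneg (f : Ω → ℝ) : 0 ≤ ∫ ω, f ω ^ 2 ∂μ := integral_nonneg fun ω ↦ sq_nonneg (f ω)
  subst hrho hlam
  refine ⟨div_nonneg (hsq_nonneg _) (variance_nonneg _ _),
    div_le_one_of_le₀ (integral_sq_linCorrect_sub_integral_le hY hM) (variance_nonneg _ _),
    sub_nonneg.2 (div_le_one_of_le₀ (integral_sq_linCorrect_sub_le hY hM) (hsq_nonneg _)),
    sub_le_self _ (div_nonneg (hsq_nonneg _) (hsq_nonneg _))⟩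

/-- 0 ≤ ρ² ≤ 1 and 0 ≤ λ² ≤ 1. -/
theorem stmt8 {Ω : Type*} [MeasurableSpace Ω] (μ : Measure Ω) [IsProbabilityMeasure μ]
    (Y M : Ω → ℝ) (hY : MemLp Y 2 μ) (hM : MemLp M 2 μ)
    (hvY : 0 < variance Y μ) (hv : 0 < variance M μ)
    (hYM : 0 < ∫ ω, (Y ω - M ω) ^ 2 ∂μ)
    (rhosq lamsq : ℝ)
    (hrho : rhosq = (∫ ω, (linCorrect μ Y M ω - ∫ y, Y y ∂μ) ^ 2 ∂μ) / variance Y μ)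
    (hlam : lamsq = 1 -
      (∫ ω, (linCorrect μ Y M ω - M ω) ^ 2 ∂μ) / ∫ ω, (Y ω - M ω) ^ 2 ∂μ) :
    0 ≤ rhosq ∧ rhosq ≤ 1 ∧ 0 ≤ lamsq ∧ lamsq ≤ 1 :=
  stmt8_general μ Y M hY hM rhosq lamsq hrho hlam
end

section
/- (IPCW identity) Let Y, C be real random variables and X a random element such that Y and C are conditionally independent given X. Let T = min(Y, C), δ = 1{Y ≤ C}, and G(t|X) = P(C > t | X) with 1 − G(Y−|X) interpreted as P(C ≥ Y | X) > 0 almost surely. Then for any bounded measurable h, E[δ·h(T,X)/P(C ≥ Y | X, Y)] = E[h(Y,X)]. -/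
open MeasureTheory ProbabilityTheory

/-- Auxiliary IPCW lemma: if `p = E[d | m]` is a.s. positive, `d` is a nonnegative
bounded integrable function, and `g` is a bounded `m`-measurable function, then
`∫ (g/p) * d = ∫ g`. -/
theorem ipcw_aux {Ω : Type*} {m m0 : MeasurableSpace Ω} (hm : m ≤ m0)
    (μ : @MeasureTheory.Measure Ω m0) [IsProbabilityMeasure μ]
    (d g p : Ω → ℝ) (hd_meas : Measurable[m0] d) (hd_nonneg : ∀ ω, 0 ≤ d ω)
    (hd_int : Integrable d μ)
    (hg_sm : StronglyMeasurable[m] g) (B : ℝ) (hB : 0 ≤ B) (hg_bound : ∀ ω, |g ω| ≤ B)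
    (hp : p = μ[d | m]) (hppos : ∀ᵐ ω ∂μ, 0 < p ω) :
    ∫ ω, (g ω / p ω) * d ω ∂μ = ∫ ω, g ω ∂μ := by
  classical
  haveI : SigmaFinite (μ.trim hm) := by infer_instance
  have hp_sm : StronglyMeasurable[m] p := by rw [hp]; exact stronglyMeasurable_condExp
  have hp_mmeas : Measurable[m] p := hp_sm.measurable
  have hp_meas : Measurable[m0] p := (hp_sm.mono hm).measurable
  have hp_int : Integrable p μ := by rw [hp]; exact integrable_condExp
  -- truncations
  set r : ℕ → Ω → ℝ := fun n ω => min (1 / p ω) (n : ℝ) with hr_def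
  have hr_sm : ∀ n, StronglyMeasurable[m] (r n) := fun n =>
    ((measurable_const.div hp_mmeas).min measurable_const).stronglyMeasurable
  have hr_meas : ∀ n, Measurable[m0] (r n) := fun n => ((hr_sm n).mono hm).measurable
  have hr_bound : ∀ n : ℕ, ∀ᵐ ω ∂μ, ‖r n ω‖ ≤ (n : ℝ) := by
    intro n
    filter_upwards [hppos] with ω hω
    have h1 : 0 < 1 / p ω := by positivity
    rw [Real.norm_eq_abs, abs_of_nonneg (le_min h1.le (Nat.cast_nonneg n))]
    exact min_le_right _ _
  have hrd_int : ∀ n : ℕ, Integrable (fun ω => r n ω * d ω) μ := fun n =>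
    hd_int.bdd_mul ((hr_sm n).mono hm).aestronglyMeasurable (hr_bound n)
  have hrd_integral : ∀ n : ℕ, ∫ ω, r n ω * d ω ∂μ ≤ 1 := by
    intro n
    have hcond : μ[(fun ω => r n ω * d ω)|m] =ᵐ[μ] fun ω => r n ω * p ω := by
      have h1 := condExp_stronglyMeasurable_mul_of_bound hm (hr_sm n) hd_int (n : ℝ)
        (hr_bound n)
      filter_upwards [h1] with ω hω
      calc (μ[(fun ω => r n ω * d ω)|m]) ω = (r n * μ[d|m]) ω := hω
        _ = r n ω * p ω := by rw [hp]; rfl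
    have h2 : ∫ ω, r n ω * d ω ∂μ = ∫ ω, r n ω * p ω ∂μ := by
      rw [← integral_condExp hm (f := fun ω => r n ω * d ω)]
      exact integral_congr_ae hcond
    have h3 : ∫ ω, r n ω * p ω ∂μ ≤ ∫ _ω, (1 : ℝ) ∂μ := by
      refine integral_mono_ae
        (hp_int.bdd_mul ((hr_sm n).mono hm).aestronglyMeasurable (hr_bound n))
        (integrable_const 1) ?_
      filter_upwards [hppos] with ω hω
      calc r n ω * p ω ≤ (1 / p ω) * p ω :=
            mul_le_mul_of_nonneg_right (min_le_left _ _) hω.le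
        _ = 1 := by field_simp
    rw [h2]
    simpa using h3
  -- integrability of d / p
  have hq_meas : Measurable[m0] (fun ω => d ω / p ω) := hd_meas.div hp_meas
  have hq_nonneg : 0 ≤ᵐ[μ] fun ω => d ω / p ω := by
    filter_upwards [hppos] with ω hω
    exact div_nonneg (hd_nonneg ω) hω.le
  have key : Integrable (fun ω => d ω / p ω) μ := by
    refine ⟨hq_meas.aestronglyMeasurable, ?_⟩
    rw [hasFiniteIntegral_iff_ofReal hq_nonneg]
    have hae : ∀ᵐ ω ∂μ,
        ENNReal.ofReal (d ω / p ω) = ⨆ n : ℕ, ENNReal.ofReal (r n ω * d ω) := by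
      filter_upwards [hppos] with ω hω
      have h1p : 0 < 1 / p ω := by positivity
      refine le_antisymm ?_ (iSup_le fun n => ENNReal.ofReal_le_ofReal ?_)
      · have hEq : d ω / p ω = r ⌈1 / p ω⌉₊ ω * d ω := by
          have hmin : r ⌈1 / p ω⌉₊ ω = 1 / p ω :=
            min_eq_left (Nat.le_ceil (1 / p ω))
          rw [hmin, one_div_mul_eq_div]
        rw [hEq]
        exact le_iSup (fun n : ℕ => ENNReal.ofReal (r n ω * d ω)) _
      · calc r n ω * d ω ≤ (1 / p ω) * d ω :=
              mul_le_mul_of_nonneg_right (min_le_left _ _) (hd_nonneg ω)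
          _ = d ω / p ω := one_div_mul_eq_div _ _
    calc ∫⁻ ω, ENNReal.ofReal (d ω / p ω) ∂μ
        = ∫⁻ ω, ⨆ n : ℕ, ENNReal.ofReal (r n ω * d ω) ∂μ := lintegral_congr_ae hae
      _ = ⨆ n : ℕ, ∫⁻ ω, ENNReal.ofReal (r n ω * d ω) ∂μ := by
          refine lintegral_iSup'
            (fun n => (((hr_meas n).mul hd_meas).ennreal_ofReal).aemeasurable) ?_
          filter_upwards [hppos] with ω hω
          intro a b hab
          refine ENNReal.ofReal_le_ofReal
            (mul_le_mul_of_nonneg_right (min_le_min le_rfl ?_) (hd_nonneg ω))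
          exact_mod_cast hab
      _ ≤ (⨆ _i : ℕ, (1 : ENNReal)) := by
          refine iSup_mono fun n => ?_
          have hnn : 0 ≤ᵐ[μ] fun ω => r n ω * d ω := by
            filter_upwards [hppos] with ω hω
            have h1p : 0 < 1 / p ω := by positivity
            exact mul_nonneg (le_min h1p.le (Nat.cast_nonneg n)) (hd_nonneg ω)
          rw [← ofReal_integral_eq_lintegral_ofReal (hrd_int n) hnn]
          calc ENNReal.ofReal (∫ ω, r n ω * d ω ∂μ) ≤ ENNReal.ofReal 1 :=
                ENNReal.ofReal_le_ofReal (hrd_integral n)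
            _ = 1 := by simp
      _ = 1 := iSup_const
      _ < ⊤ := by simp
  -- the main computation
  set f : Ω → ℝ := fun ω => g ω / p ω with hf_def
  have hf_sm : StronglyMeasurable[m] f :=
    (hg_sm.measurable.div hp_mmeas).stronglyMeasurable
  have hfd_int : Integrable (fun ω => f ω * d ω) μ := by
    refine Integrable.mono' (key.const_mul B)
      (((hf_sm.mono hm).measurable.mul hd_meas).aestronglyMeasurable) ?_
    filter_upwards [hppos] with ω hω
    calc ‖f ω * d ω‖ = |g ω| / p ω * d ω := by
          rw [Real.norm_eq_abs, abs_mul, hf_def, abs_div, abs_of_pos hω,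
            abs_of_nonneg (hd_nonneg ω)]
      _ ≤ B / p ω * d ω :=
          mul_le_mul_of_nonneg_right ((div_le_div_iff_of_pos_right hω).mpr (hg_bound ω))
            (hd_nonneg ω)
      _ = B * (d ω / p ω) := by ring
  have hmul : μ[(fun ω => f ω * d ω)|m] =ᵐ[μ] fun ω => f ω * p ω := by
    have h1 := condExp_mul_of_stronglyMeasurable_left hf_sm hfd_int hd_int
    filter_upwards [h1] with ω hω
    calc (μ[(fun ω => f ω * d ω)|m]) ω = (f * μ[d|m]) ω := hω
      _ = f ω * p ω := by rw [hp]; rfl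
  calc ∫ ω, f ω * d ω ∂μ
      = ∫ ω, (μ[(fun ω => f ω * d ω)|m]) ω ∂μ := (integral_condExp hm).symm
    _ = ∫ ω, f ω * p ω ∂μ := integral_congr_ae hmul
    _ = ∫ ω, g ω ∂μ := by
        refine integral_congr_ae ?_
        filter_upwards [hppos] with ω hω
        rw [hf_def]
        exact div_mul_cancel₀ _ hω.ne'

/-- (IPCW identity) If Y and C are conditionally independent given X and
P(C ≥ Y | X, Y) > 0 a.s., then for bounded measurable h,
E[δ·h(T,X)/P(C ≥ Y | X, Y)] = E[h(Y,X)], where T = min(Y,C), δ = 1{Y ≤ C}. -/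
theorem stmt18 {Ω β : Type*} [MeasurableSpace Ω] [StandardBorelSpace Ω] [Nonempty Ω]
    [MeasurableSpace β]
    (μ : Measure Ω) [IsProbabilityMeasure μ]
    (Y C : Ω → ℝ) (X : Ω → β)
    (hY : Measurable Y) (hC : Measurable C) (hX : Measurable X)
    (hind : CondIndepFun (MeasurableSpace.comap X inferInstance) (hX.comap_le) Y C μ)
    (h : ℝ → β → ℝ) (hmeas : Measurable (fun q : ℝ × β => h q.1 q.2))
    (B : ℝ) (hbound : ∀ t x, |h t x| ≤ B)
    (p : Ω → ℝ)
    (hp : p = μ[Set.indicator {ω' | Y ω' ≤ C ω'} (fun _ => (1 : ℝ)) |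
        MeasurableSpace.comap (fun ω => (X ω, Y ω)) inferInstance])
    (hppos : ∀ᵐ ω ∂μ, 0 < p ω) :
    ∫ ω, (Set.indicator {ω' | Y ω' ≤ C ω'} (fun _ => (1 : ℝ)) ω) *
        h (min (Y ω) (C ω)) (X ω) / p ω ∂μ
      = ∫ ω, h (Y ω) (X ω) ∂μ := by
  classical
  have hβ : Nonempty β := ⟨X (Classical.arbitrary Ω)⟩
  have hB : 0 ≤ B := le_trans (abs_nonneg _) (hbound 0 hβ.some)
  have hs : MeasurableSet {ω' | Y ω' ≤ C ω'} := measurableSet_le hY hC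
  have hm : MeasurableSpace.comap (fun ω => (X ω, Y ω)) inferInstance
      ≤ (by infer_instance : MeasurableSpace Ω) := (hX.prodMk hY).comap_le
  have hG_sm : StronglyMeasurable[MeasurableSpace.comap (fun ω => (X ω, Y ω)) inferInstance]
      (fun ω => h (Y ω) (X ω)) := by
    have hpair : Measurable[MeasurableSpace.comap (fun ω => (X ω, Y ω)) inferInstance]
        (fun ω => (X ω, Y ω)) := Measurable.of_comap_le le_rfl
    exact ((hmeas.comp measurable_swap).comp hpair).stronglyMeasurable
  have haux := ipcw_aux hm μ (Set.indicator {ω' | Y ω' ≤ C ω'} (fun _ => (1 : ℝ)))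
    (fun ω => h (Y ω) (X ω)) p (measurable_const.indicator hs)
    (fun ω => Set.indicator_nonneg (fun _ _ => zero_le_one) ω)
    ((integrable_const (1 : ℝ)).indicator hs) hG_sm B hB (fun ω => hbound _ _) hp hppos
  rw [← haux]
  refine integral_congr_ae (Filter.Eventually.of_forall fun ω => ?_)
  by_cases hω : ω ∈ {ω' | Y ω' ≤ C ω'}
  · have hmin : min (Y ω) (C ω) = Y ω := min_eq_left hω
    simp [Set.indicator_of_mem hω, hmin]
  · simp [Set.indicator_of_notMem hω]
end
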